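/- Let Z ∼ Beta(n/2, m/2) with m > n and n/m → c₃ for some 0 ≤ c₃ < 1. Then there exists a constant c₁ such that for all sufficiently large m and n, P(|Z − n/(m+n)| ≥ c₁·n^{3/4}/(m+n)) ≤ 2·exp(−n^{1/2}). -/

import Mathlib

open MeasureTheory ProbabilityTheory Filter

/-- The Beta distribution on `(0,1)` with parameters `a, b > 0`, with density
`Γ(a+b)/(Γ(a)Γ(b)) · x^(a-1) (1-x)^(b-1)`. -/
noncomputable def betaMeasure (a b : ℝ) : Measure ℝ :=
  volume.withDensity fun x =>
    ENNReal.ofReal (if 0 < x ∧ x < 1 then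
      Real.Gamma (a + b) / (Real.Gamma a * Real.Gamma b)
        * x ^ (a - 1) * (1 - x) ^ (b - 1) else 0)

/-! The log-density `g x = (a-1) log x + (b-1) log (1-x)` of `Beta(a, b)` is concave. For `a < b`,
with `N = a + b` and mean `μ = a/N`, its slope at `μ ± t/2` has size at least `t N² / (8a)`. As `g`
lies below its tangent line there, the mass beyond `μ ± t` is at most `exp(-t² N² / (16a))` times
the mass of a window of width `≍ t` between the tangent point and `μ`, on which `g` is at least its
value at the tangent point. For `a = n/2`, `N = (m+n)/2`, `t = 8 n^{3/4}/(m+n)` the exponent is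
`2 √n`. -/

open Real Set

namespace ConcaveOn

variable {S : Set ℝ} {f : ℝ → ℝ} {f' x y : ℝ}

lemma le_add_mul_sub_of_hasDerivAt (hf : ConcaveOn ℝ S f) (hx : x ∈ S) (hy : y ∈ S)
    (hf' : HasDerivAt f f' x) : f y ≤ f x + f' * (y - x) := by
  rcases lt_trichotomy x y with hxy | rfl | hyx
  · have h := hf.slope_le_of_hasDerivAt hx hy hxy hf'
    rw [slope_def_field, div_le_iff₀ (sub_pos.2 hxy)] at h
    linarith
  · simp
  · have h := hf.le_slope_of_hasDerivAt hy hx hyx hf'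
    rw [slope_def_field, le_div_iff₀ (sub_pos.2 hyx)] at h
    linarith

lemma antitoneOn_inter_Ici_of_hasDerivAt_nonpos (hf : ConcaveOn ℝ S f) (hx : x ∈ S)
    (hf' : HasDerivAt f f' x) (hf'0 : f' ≤ 0) : AntitoneOn f (S ∩ Ici x) := by
  intro y hy z hz hyz
  have hzx : f z ≤ f x := by
    nlinarith [hf.le_add_mul_sub_of_hasDerivAt hx hz.1 hf', hz.2.out]
  have := hf.min_le_of_mem_Icc hx hz.1 ⟨hy.2.out, hyz⟩
  rwa [min_eq_right hzx] at this

lemma monotoneOn_inter_Iic_of_hasDerivAt_nonneg (hf : ConcaveOn ℝ S f) (hx : x ∈ S)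
    (hf' : HasDerivAt f f' x) (hf'0 : 0 ≤ f') : MonotoneOn f (S ∩ Iic x) := by
  intro y hy z hz hyz
  have hyx : f y ≤ f x := by
    nlinarith [hf.le_add_mul_sub_of_hasDerivAt hx hy.1 hf', hy.2.out]
  have := hf.min_le_of_mem_Icc hy.1 hx ⟨hyz, hz.2.out⟩
  rwa [min_eq_left hyx] at this

end ConcaveOn

section ExpTail

variable {g : ℝ → ℝ} {T : Set ℝ} {c s u v : ℝ}

lemma setIntegral_exp_le_of_tangent_Ici (hs : 0 < s) (hsv : 1 ≤ s * v) (hT : MeasurableSet T)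
    (hTc : T ⊆ Ici (c + u)) (hTint : IntegrableOn (fun y => exp (g y)) T)
    (hKint : IntegrableOn (fun y => exp (g y)) (Icc (c - v) c))
    (hgT : ∀ y ∈ T, g y ≤ g c - s * (y - c)) (hgK : ∀ y ∈ Icc (c - v) c, g c ≤ g y) :
    ∫ y in T, exp (g y) ≤ exp (-(s * u)) * ∫ y in Icc (c - v) c, exp (g y) := by
  have hv : 0 ≤ v := by nlinarith
  have hlin : IntegrableOn (fun y => exp (g c + s * c) * exp (-s * y)) (Ici (c + u)) :=
    (integrableOn_Ici_iff_integrableOn_Ioi (by finiteness)).2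
      ((exp_neg_integrableOn_Ioi _ hs).const_mul _)
  have hcore : exp (g c) * v ≤ ∫ y in Icc (c - v) c, exp (g y) := by
    simpa [volume_real_Icc_of_le (by linarith : c - v ≤ c)] using
      setIntegral_ge_of_const_le_real measurableSet_Icc measure_Icc_lt_top.ne
        (fun y hy => exp_le_exp.2 (hgK y hy)) hKint
  calc ∫ y in T, exp (g y)
      ≤ ∫ y in T, exp (g c + s * c) * exp (-s * y) := by
        refine setIntegral_mono_on hTint (hlin.mono_set hTc) hT fun y hy => ?_
        rw [← exp_add]
        exact exp_le_exp.2 (by linarith [hgT y hy])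
    _ ≤ ∫ y in Ici (c + u), exp (g c + s * c) * exp (-s * y) :=
        setIntegral_mono_set hlin (ae_of_all _ fun y => by positivity) hTc.eventuallyLE
    _ = exp (-(s * u)) * (exp (g c) / s) := by
        rw [integral_Ici_eq_integral_Ioi, integral_const_mul, integral_exp_mul_Ioi (by linarith),
          neg_div_neg_eq, mul_div_assoc', mul_div_assoc', ← exp_add, ← exp_add]
        ring_nf
    _ ≤ exp (-(s * u)) * ∫ y in Icc (c - v) c, exp (g y) := by
        gcongr
        refine le_trans ?_ hcore
        rw [div_le_iff₀ hs]
        nlinarith [exp_pos (g c)]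

lemma setIntegral_exp_le_of_tangent_Iic (hs : 0 < s) (hsv : 1 ≤ s * v) (hT : MeasurableSet T)
    (hTc : T ⊆ Iic (c - u)) (hTint : IntegrableOn (fun y => exp (g y)) T)
    (hKint : IntegrableOn (fun y => exp (g y)) (Icc c (c + v)))
    (hgT : ∀ y ∈ T, g y ≤ g c - s * (c - y)) (hgK : ∀ y ∈ Icc c (c + v), g c ≤ g y) :
    ∫ y in T, exp (g y) ≤ exp (-(s * u)) * ∫ y in Icc c (c + v), exp (g y) := by
  have hv : 0 ≤ v := by nlinarith
  have hlin : IntegrableOn (fun y => exp (g c - s * c) * exp (s * y)) (Iic (c - u)) :=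
    (integrableOn_exp_mul_Iic hs _).const_mul _
  have hcore : exp (g c) * v ≤ ∫ y in Icc c (c + v), exp (g y) := by
    simpa [volume_real_Icc_of_le (by linarith : c ≤ c + v)] using
      setIntegral_ge_of_const_le_real measurableSet_Icc measure_Icc_lt_top.ne
        (fun y hy => exp_le_exp.2 (hgK y hy)) hKint
  calc ∫ y in T, exp (g y)
      ≤ ∫ y in T, exp (g c - s * c) * exp (s * y) := by
        refine setIntegral_mono_on hTint (hlin.mono_set hTc) hT fun y hy => ?_
        rw [← exp_add]
        exact exp_le_exp.2 (by linarith [hgT y hy])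
    _ ≤ ∫ y in Iic (c - u), exp (g c - s * c) * exp (s * y) :=
        setIntegral_mono_set hlin (ae_of_all _ fun y => by positivity) hTc.eventuallyLE
    _ = exp (-(s * u)) * (exp (g c) / s) := by
        rw [integral_const_mul, integral_exp_mul_Iic hs, mul_div_assoc', mul_div_assoc', ← exp_add,
          ← exp_add]
        ring_nf
    _ ≤ exp (-(s * u)) * ∫ y in Icc c (c + v), exp (g y) := by
        gcongr
        refine le_trans ?_ hcore
        rw [div_le_iff₀ hs]
        nlinarith [exp_pos (g c)]

end ExpTail

noncomputable def betaLogDensity (a b x : ℝ) : ℝ := (a - 1) * log x + (b - 1) * log (1 - x)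

noncomputable def betaLogDensityDeriv (a b x : ℝ) : ℝ := (a - 1) / x - (b - 1) / (1 - x)

section LogDensity

variable {a b x : ℝ}

lemma hasDerivAt_betaLogDensity (hx0 : 0 < x) (hx1 : x < 1) :
    HasDerivAt (betaLogDensity a b) (betaLogDensityDeriv a b x) x := by
  have hlog := (hasDerivAt_log hx0.ne').const_mul (a - 1)
  have hlog1 := ((hasDerivAt_log (sub_pos.2 hx1).ne').comp x
    ((hasDerivAt_id x).const_sub 1)).const_mul (b - 1)
  exact (hlog.add hlog1).congr_deriv (by rw [betaLogDensityDeriv]; ring)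

lemma concaveOn_betaLogDensity (ha : 1 ≤ a) (hb : 1 ≤ b) :
    ConcaveOn ℝ (Ioo 0 1) (betaLogDensity a b) := by
  refine AntitoneOn.concaveOn_of_deriv (convex_Ioo 0 1)
    (fun x hx => (hasDerivAt_betaLogDensity hx.1 hx.2).continuousAt.continuousWithinAt)
    (fun x hx => ?_) ?_ <;> rw [interior_Ioo] at *
  · exact (hasDerivAt_betaLogDensity hx.1 hx.2).differentiableAt.differentiableWithinAt
  intro x hx y hy hxy
  rw [(hasDerivAt_betaLogDensity hx.1 hx.2).deriv, (hasDerivAt_betaLogDensity hy.1 hy.2).deriv]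
  have := hx.1; have := hy.2
  simp only [betaLogDensityDeriv]
  gcongr

lemma exp_betaLogDensity (hx0 : 0 < x) (hx1 : x < 1) :
    exp (betaLogDensity a b x) = x ^ (a - 1) * (1 - x) ^ (b - 1) := by
  rw [rpow_def_of_pos hx0, rpow_def_of_pos (sub_pos.2 hx1), ← exp_add, betaLogDensity]
  ring_nf

lemma integrableOn_exp_betaLogDensity (ha : 1 ≤ a) (hb : 1 ≤ b) :
    IntegrableOn (fun x => exp (betaLogDensity a b x)) (Ioo 0 1) := by
  have hcont : ContinuousOn (fun x : ℝ => x ^ (a - 1) * (1 - x) ^ (b - 1)) (Icc 0 1) := by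
    fun_prop (disch := first | intro; linarith | linarith)
  refine (hcont.integrableOn_Icc.mono_set Ioo_subset_Icc_self).congr_fun (fun x hx => ?_)
    measurableSet_Ioo
  exact (exp_betaLogDensity hx.1 hx.2).symm

lemma betaLogDensityDeriv_eq (hx0 : 0 < x) (hx1 : x < 1) :
    betaLogDensityDeriv a b x = (a - 1 - (a + b - 2) * x) / (x * (1 - x)) := by
  rw [betaLogDensityDeriv, div_sub_div _ _ hx0.ne' (sub_pos.2 hx1).ne']
  ring_nf

end LogDensity

section Slopes

variable {a b u : ℝ}

lemma betaLogDensityDeriv_mean_add_le (ha : 2 ≤ a) (hab : a < b) (hu0 : 0 ≤ u)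
    (hu : u ≤ a / (a + b)) :
    betaLogDensityDeriv a b (a / (a + b) + u) ≤ -(u * (a + b) ^ 2 / (4 * a)) := by
  set μ := a / (a + b) with hμ
  have hN : 0 < a + b := by linarith
  have hμN : μ * (a + b) = a := div_mul_cancel₀ _ hN.ne'
  have hμ0 : 0 < μ := by positivity
  have hμ2 : 2 * μ < 1 := by nlinarith
  have hx0 : 0 < μ + u := by linarith
  have hx1 : μ + u < 1 := by linarith
  have hnum : a - 1 - (a + b - 2) * (μ + u) ≤ -(u * (a + b) / 2) := by nlinarith
  have hden : (μ + u) * (1 - (μ + u)) ≤ 2 * μ := by nlinarith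
  rw [betaLogDensityDeriv_eq hx0 hx1]
  have hden0 : 0 < (μ + u) * (1 - (μ + u)) := mul_pos hx0 (by linarith)
  calc (a - 1 - (a + b - 2) * (μ + u)) / ((μ + u) * (1 - (μ + u)))
      ≤ -(u * (a + b) / 2) / (2 * μ) := by
        rw [div_le_div_iff₀ hden0 (by positivity)]
        nlinarith [mul_le_mul_of_nonneg_left hden (by positivity : (0:ℝ) ≤ u * (a + b) / 2)]
    _ = -(u * (a + b) ^ 2 / (4 * a)) := by
        rw [hμ]; field_simp; ring

lemma le_betaLogDensityDeriv_mean_sub (ha : 2 ≤ a) (hab : a < b) (hu2 : 2 ≤ u * (a + b))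
    (hu : u < a / (a + b)) :
    (a + b) * (u * (a + b) - 2) / (2 * a) ≤ betaLogDensityDeriv a b (a / (a + b) - u) := by
  set μ := a / (a + b) with hμ
  have hN : 0 < a + b := by linarith
  have hμN : μ * (a + b) = a := div_mul_cancel₀ _ hN.ne'
  have hμ0 : 0 < μ := by positivity
  have hμ2 : 2 * μ < 1 := by nlinarith
  have hu0 : 0 < u := by nlinarith
  have hx0 : 0 < μ - u := by linarith
  have hx1 : μ - u < 1 := by linarith
  have hnum : u * (a + b) / 2 - 1 ≤ a - 1 - (a + b - 2) * (μ - u) := by nlinarith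
  have hden : (μ - u) * (1 - (μ - u)) ≤ μ := by nlinarith
  have hden0 : 0 < (μ - u) * (1 - (μ - u)) := mul_pos hx0 (by linarith)
  rw [betaLogDensityDeriv_eq hx0 hx1]
  calc (a + b) * (u * (a + b) - 2) / (2 * a)
      = (u * (a + b) / 2 - 1) / μ := by
        rw [hμ]; field_simp
    _ ≤ (a - 1 - (a + b - 2) * (μ - u)) / ((μ - u) * (1 - (μ - u))) := by
        rw [div_le_div_iff₀ hμ0 hden0]
        nlinarith [mul_le_mul_of_nonneg_left hden (by linarith : (0:ℝ) ≤ u * (a + b) / 2 - 1)]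

end Slopes

section Measure

variable {a b : ℝ}

lemma betaMeasure_eq_probabilityTheory_betaMeasure :
    _root_.betaMeasure a b = ProbabilityTheory.betaMeasure a b := by
  rw [_root_.betaMeasure, ProbabilityTheory.betaMeasure]
  congr with x
  rw [betaPDF_eq, ProbabilityTheory.beta, one_div_div]

lemma isProbabilityMeasure_betaMeasure (ha : 0 < a) (hb : 0 < b) :
    IsProbabilityMeasure (_root_.betaMeasure a b) :=
  betaMeasure_eq_probabilityTheory_betaMeasure ▸ isProbabilityMeasureBeta ha hb

lemma betaMeasure_compl_Ioo : _root_.betaMeasure a b (Ioo 0 1)ᶜ = 0 := by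
  rw [_root_.betaMeasure, withDensity_apply _ measurableSet_Ioo.compl]
  refine setLIntegral_eq_zero measurableSet_Ioo.compl fun x hx => ?_
  simp [if_neg (show ¬(0 < x ∧ x < 1) from hx)]

lemma betaMeasure_eq_ofReal_setIntegral (ha : 1 ≤ a) (hb : 1 ≤ b) {S : Set ℝ}
    (hS : MeasurableSet S) (hS1 : S ⊆ Ioo 0 1) :
    _root_.betaMeasure a b S = ENNReal.ofReal
      (Gamma (a + b) / (Gamma a * Gamma b) * ∫ x in S, exp (betaLogDensity a b x)) := by
  rw [_root_.betaMeasure, withDensity_apply _ hS, ← integral_const_mul,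
    ofReal_integral_eq_lintegral_ofReal]
  · refine setLIntegral_congr_fun hS fun x hx => ?_
    obtain ⟨hx0, hx1⟩ := hS1 hx
    rw [if_pos ⟨hx0, hx1⟩, exp_betaLogDensity hx0 hx1, mul_assoc]
  · exact ((integrableOn_exp_betaLogDensity ha hb).mono_set hS1).const_mul _
  · exact ae_restrict_of_forall_mem hS fun x _ => by positivity

lemma betaMeasure_le_of_setIntegral_le (ha : 1 ≤ a) (hb : 1 ≤ b) {T K : Set ℝ}
    (hT : MeasurableSet T) (hT1 : T ⊆ Ioo 0 1) (hK : MeasurableSet K) (hK1 : K ⊆ Ioo 0 1)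
    {r : ℝ} (hr : 0 ≤ r)
    (h : ∫ x in T, exp (betaLogDensity a b x) ≤ r * ∫ x in K, exp (betaLogDensity a b x)) :
    _root_.betaMeasure a b T ≤ ENNReal.ofReal r := by
  have hC : 0 ≤ Gamma (a + b) / (Gamma a * Gamma b) := by positivity
  calc _root_.betaMeasure a b T
      ≤ ENNReal.ofReal r * _root_.betaMeasure a b K := by
        rw [betaMeasure_eq_ofReal_setIntegral ha hb hT hT1,
          betaMeasure_eq_ofReal_setIntegral ha hb hK hK1, ← ENNReal.ofReal_mul hr]
        exact ENNReal.ofReal_le_ofReal (by nlinarith)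
    _ ≤ ENNReal.ofReal r :=
        have := isProbabilityMeasure_betaMeasure (a := a) (b := b) (by linarith) (by linarith)
        mul_le_of_le_one_right' prob_le_one

end Measure

section Tails

variable {a b t : ℝ}

lemma betaMeasure_Ico_mean_add_le (ha : 2 ≤ a) (hab : a < b) (ht0 : 0 < t) (ht : t ≤ a / (a + b))
    (hE : 1 ≤ t ^ 2 * (a + b) ^ 2 / (16 * a)) :
    _root_.betaMeasure a b (Ico (a / (a + b) + t) 1)
      ≤ ENNReal.ofReal (exp (-(t ^ 2 * (a + b) ^ 2 / (16 * a)))) := by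
  set μ := a / (a + b) with hμ
  set g := betaLogDensity a b
  set u := t / 2 with hu
  set c := μ + u with hc
  set s := u * (a + b) ^ 2 / (4 * a) with hs
  have hsu : s * u = t ^ 2 * (a + b) ^ 2 / (16 * a) := by rw [hs, hu]; ring
  have hN : 0 < a + b := by linarith
  have hμ0 : 0 < μ := div_pos (by linarith) hN
  have hμ2 : 2 * μ < 1 := by
    rw [hμ, ← mul_div_assoc, div_lt_one hN]; linarith
  have hs0 : 0 < s := by rw [hs, hu]; positivity
  have hconc := concaveOn_betaLogDensity (a := a) (b := b) (by linarith) (by linarith)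
  have hint := integrableOn_exp_betaLogDensity (a := a) (b := b) (by linarith) (by linarith)
  have hμmem : μ ∈ Ioo (0 : ℝ) 1 := ⟨hμ0, by linarith⟩
  have hcmem : c ∈ Ioo (0 : ℝ) 1 := ⟨by linarith, by linarith⟩
  have hslope_c : betaLogDensityDeriv a b c ≤ -s :=
    betaLogDensityDeriv_mean_add_le ha hab (by positivity) (by linarith)
  have hslope_μ : betaLogDensityDeriv a b μ ≤ 0 := by
    simpa using betaLogDensityDeriv_mean_add_le ha hab le_rfl hμ0.le
  have hT : Ico (μ + t) 1 ⊆ Ioo 0 1 := fun y hy => ⟨by linarith [hy.1], hy.2⟩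
  have hK : Icc (c - u) c ⊆ Ioo 0 1 := fun y hy => ⟨by linarith [hy.1], by linarith [hy.2]⟩
  refine betaMeasure_le_of_setIntegral_le (by linarith) (by linarith) measurableSet_Ico hT
    measurableSet_Icc hK (exp_pos _).le ?_
  rw [← hsu]
  refine setIntegral_exp_le_of_tangent_Ici hs0 (hsu ▸ hE) measurableSet_Ico
    (fun y hy => show c + u ≤ y by linarith [hy.1]) (hint.mono_set hT) (hint.mono_set hK)
    (fun y hy => ?_) (fun y hy => ?_)
  · nlinarith [hconc.le_add_mul_sub_of_hasDerivAt hcmem (hT hy)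
      (hasDerivAt_betaLogDensity hcmem.1 hcmem.2), hy.1]
  · exact hconc.antitoneOn_inter_Ici_of_hasDerivAt_nonpos hμmem
      (hasDerivAt_betaLogDensity hμmem.1 hμmem.2) hslope_μ ⟨hK hy, by simpa [hc] using hy.1⟩
      ⟨hcmem, by simp [hc]; linarith⟩ hy.2

lemma betaMeasure_Ioc_mean_sub_le (ha : 2 ≤ a) (hab : a < b) (ht : t ≤ a / (a + b))
    (htN : 8 ≤ t * (a + b)) (hE : 2 ≤ t ^ 2 * (a + b) ^ 2 / (16 * a)) :
    _root_.betaMeasure a b (Ioc 0 (a / (a + b) - t))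
      ≤ ENNReal.ofReal (exp (-(t ^ 2 * (a + b) ^ 2 / (16 * a)))) := by
  set μ := a / (a + b) with hμ
  set g := betaLogDensity a b
  set u := t / 2 with hu
  set c := μ - u
  set s := u * (a + b) ^ 2 / (4 * a) with hs
  have hsu : s * u = t ^ 2 * (a + b) ^ 2 / (16 * a) := by rw [hs, hu]; ring
  have hN : 0 < a + b := by linarith
  have ht0 : 0 < t := by nlinarith
  have hμ1 : μ < 1 := by rw [hμ, div_lt_one hN]; linarith
  have hs0 : 0 < s := by rw [hs, hu]; positivity
  have huN : 4 ≤ u * (a + b) := by rw [hu]; linarith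
  have hconc := concaveOn_betaLogDensity (a := a) (b := b) (by linarith) (by linarith)
  have hint := integrableOn_exp_betaLogDensity (a := a) (b := b) (by linarith) (by linarith)
  -- `g'(μ)` can be as low as `-(a+b)/a`, so `g` is only known to increase up to
  -- `c + u/2 = μ - t/4`.
  have hqmem : c + u / 2 ∈ Ioo (0 : ℝ) 1 := ⟨by linarith, by linarith⟩
  have hcmem : c ∈ Ioo (0 : ℝ) 1 := ⟨by linarith, by linarith⟩
  have hslope_c : s ≤ betaLogDensityDeriv a b c := by
    refine le_trans ?_ (le_betaLogDensityDeriv_mean_sub ha hab (by linarith) (by linarith))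
    rw [hs, div_le_div_iff₀ (by linarith) (by linarith)]
    nlinarith [mul_nonneg (mul_nonneg (by linarith : (0 : ℝ) ≤ a) hN.le)
      (by linarith : 0 ≤ u * (a + b) - 4)]
  have hslope_q : 0 ≤ betaLogDensityDeriv a b (c + u / 2) := by
    have hq : c + u / 2 = μ - u / 2 := by ring
    rw [hq]
    refine le_trans ?_ (le_betaLogDensityDeriv_mean_sub ha hab (by linarith) (by linarith))
    exact div_nonneg (by nlinarith) (by linarith)
  have hT : Ioc 0 (μ - t) ⊆ Ioo 0 1 := fun y hy => ⟨hy.1, by linarith [hy.2]⟩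
  have hK : Icc c (c + u / 2) ⊆ Ioo 0 1 := fun y hy => ⟨by linarith [hy.1], by linarith [hy.2]⟩
  refine betaMeasure_le_of_setIntegral_le (by linarith) (by linarith) measurableSet_Ioc hT
    measurableSet_Icc hK (exp_pos _).le ?_
  rw [← hsu]
  refine setIntegral_exp_le_of_tangent_Iic hs0 (by nlinarith) measurableSet_Ioc
    (fun y hy => show y ≤ c - u by linarith [hy.2]) (hint.mono_set hT) (hint.mono_set hK)
    (fun y hy => ?_) (fun y hy => ?_)
  · nlinarith [hconc.le_add_mul_sub_of_hasDerivAt hcmem (hT hy)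
      (hasDerivAt_betaLogDensity hcmem.1 hcmem.2), hy.2]
  · exact hconc.monotoneOn_inter_Iic_of_hasDerivAt_nonneg hqmem
      (hasDerivAt_betaLogDensity hqmem.1 hqmem.2) hslope_q ⟨hcmem, by simp; linarith⟩
      ⟨hK hy, hy.2⟩ hy.1

theorem betaMeasure_abs_sub_mean_ge_le (ha : 2 ≤ a) (hab : a < b) (ht : t ≤ a / (a + b))
    (htN : 8 ≤ t * (a + b)) (hE : 2 ≤ t ^ 2 * (a + b) ^ 2 / (16 * a)) :
    _root_.betaMeasure a b {x | t ≤ |x - a / (a + b)|}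
      ≤ ENNReal.ofReal (2 * exp (-(t ^ 2 * (a + b) ^ 2 / (16 * a)))) := by
  set μ := a / (a + b)
  have ht0 : 0 < t := by nlinarith
  have hcover : {x | t ≤ |x - μ|} ⊆ (Ioo 0 1)ᶜ ∪ (Ioc 0 (μ - t) ∪ Ico (μ + t) 1) := by
    intro x hx
    by_cases hx01 : x ∈ Ioo 0 1
    · rcases le_abs'.1 hx.out with h | h
      · exact Or.inr (Or.inl ⟨hx01.1, by linarith⟩)
      · exact Or.inr (Or.inr ⟨by linarith, hx01.2⟩)
    · exact Or.inl hx01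
  calc _root_.betaMeasure a b {x | t ≤ |x - μ|}
      ≤ _root_.betaMeasure a b (Ioo 0 1)ᶜ
          + (_root_.betaMeasure a b (Ioc 0 (μ - t)) + _root_.betaMeasure a b (Ico (μ + t) 1)) :=
        (measure_mono hcover).trans <| (measure_union_le _ _).trans <|
          add_le_add_right (measure_union_le _ _) _
    _ ≤ 0 + (ENNReal.ofReal (exp (-(t ^ 2 * (a + b) ^ 2 / (16 * a))))
          + ENNReal.ofReal (exp (-(t ^ 2 * (a + b) ^ 2 / (16 * a))))) := by
        gcongr
        · exact betaMeasure_compl_Ioo.le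
        · exact betaMeasure_Ioc_mean_sub_le ha hab ht htN hE
        · exact betaMeasure_Ico_mean_add_le ha hab ht0 ht (by linarith)
    _ = ENNReal.ofReal (2 * exp (-(t ^ 2 * (a + b) ^ 2 / (16 * a)))) := by
        rw [zero_add, ← ENNReal.ofReal_add (exp_pos _).le (exp_pos _).le, two_mul]

end Tails

lemma betaMeasure_half_abs_sub_ge_le {n m : ℝ} (hn : 4096 ≤ n) (hnm : n < m) :
    _root_.betaMeasure (n / 2) (m / 2) {x | 8 * n ^ ((3 : ℝ) / 4) / (m + n) ≤ |x - n / (m + n)|}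
      ≤ ENNReal.ofReal (2 * exp (-n ^ ((1 : ℝ) / 2))) := by
  set r := n ^ ((1 : ℝ) / 4)
  have hpow : ∀ j : ℕ, n ^ ((j : ℝ) / 4) = r ^ j := fun j => by
    rw [← rpow_natCast, ← rpow_mul (by linarith)]; ring_nf
  have hn4 : n = r ^ 4 := by simpa using hpow 4
  have h34 : n ^ ((3 : ℝ) / 4) = r ^ 3 := by exact_mod_cast hpow 3
  have h12 : n ^ ((1 : ℝ) / 2) = r ^ 2 := by
    rw [show (1 : ℝ) / 2 = ((2 : ℕ) : ℝ) / 4 by norm_num, hpow]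
  have hr : 8 ≤ r :=
    le_of_pow_le_pow_left₀ (n := 4) (by norm_num) (by positivity) (by rw [← hn4]; linarith)
  have hmn : 0 < m + n := by linarith
  have hμ : n / (m + n) = n / 2 / (n / 2 + m / 2) := by
    rw [← add_div, div_div_div_cancel_right₀ two_ne_zero, add_comm]
  have htN : 8 * n ^ ((3 : ℝ) / 4) / (m + n) * (n / 2 + m / 2) = 4 * r ^ 3 := by
    rw [h34]; field_simp; ring
  have hE : (8 * n ^ ((3 : ℝ) / 4) / (m + n)) ^ 2 * (n / 2 + m / 2) ^ 2 / (16 * (n / 2))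
      = 2 * r ^ 2 := by
    rw [← mul_pow, htN, hn4]; field_simp; ring
  rw [hμ, h12]
  refine (betaMeasure_abs_sub_mean_ge_le (by linarith) (by linarith) ?_ ?_ ?_).trans ?_
  · rw [le_div_iff₀ (by linarith), htN]
    nlinarith [mul_nonneg (pow_nonneg (by positivity : 0 ≤ r) 3) (by linarith : 0 ≤ r - 8)]
  · rw [htN]; nlinarith
  · rw [hE]; nlinarith
  · rw [hE]; gcongr; nlinarith

theorem beta_concentration_general
    (m n : ℕ → ℕ) (hmn : ∀ k, n k < m k)
    (hn : Tendsto (fun k => (n k : ℝ)) atTop atTop) :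
    ∃ c₁ > (0 : ℝ), ∃ K : ℕ, ∀ k ≥ K,
      ∀ (Ω : Type) (_ : MeasurableSpace Ω) (P : Measure Ω), IsProbabilityMeasure P →
        ∀ Z : Ω → ℝ, Measurable Z →
          Measure.map Z P = _root_.betaMeasure ((n k : ℝ) / 2) ((m k : ℝ) / 2) →
          P {ω | c₁ * (n k : ℝ) ^ ((3 : ℝ) / 4) / ((m k : ℝ) + n k)
                  ≤ |Z ω - (n k : ℝ) / ((m k : ℝ) + n k)|}
            ≤ ENNReal.ofReal (2 * Real.exp (-(n k : ℝ) ^ ((1 : ℝ) / 2))) := by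
  refine ⟨8, by norm_num, ?_⟩
  obtain ⟨K, hK⟩ := eventually_atTop.1 (hn.eventually_ge_atTop 4096)
  refine ⟨K, fun k hk Ω _ P _ Z hZ hmap => ?_⟩
  rw [← preimage_ofPred_eq (f := Z) (p := fun x => _ ≤ |x - _|),
    ← Measure.map_apply hZ (measurableSet_le measurable_const (by fun_prop)), hmap]
  exact betaMeasure_half_abs_sub_ge_le (hK k hk) (by exact_mod_cast hmn k)

/-- **Beta concentration.** Along sequences `m k > n k → ∞` with `n k / m k → c₃`,
`0 ≤ c₃ < 1`, there is a constant `c₁` such that for all sufficiently large `k`,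
if `Z ∼ Beta(n k / 2, m k / 2)` then
`P(|Z − n/(m+n)| ≥ c₁ n^{3/4}/(m+n)) ≤ 2 exp(−n^{1/2})`. -/
theorem beta_concentration
    (m n : ℕ → ℕ) (hmn : ∀ k, n k < m k)
    (hn : Tendsto (fun k => (n k : ℝ)) atTop atTop)
    (c₃ : ℝ) (hc₃0 : 0 ≤ c₃) (hc₃1 : c₃ < 1)
    (hratio : Tendsto (fun k => (n k : ℝ) / (m k : ℝ)) atTop (nhds c₃)) :
    ∃ c₁ > (0 : ℝ), ∃ K : ℕ, ∀ k ≥ K,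
      ∀ (Ω : Type) (_ : MeasurableSpace Ω) (P : Measure Ω), IsProbabilityMeasure P →
        ∀ Z : Ω → ℝ, Measurable Z →
          Measure.map Z P = _root_.betaMeasure ((n k : ℝ) / 2) ((m k : ℝ) / 2) →
          P {ω | c₁ * (n k : ℝ) ^ ((3 : ℝ) / 4) / ((m k : ℝ) + n k)
                  ≤ |Z ω - (n k : ℝ) / ((m k : ℝ) + n k)|}
            ≤ ENNReal.ofReal (2 * Real.exp (-(n k : ℝ) ^ ((1 : ℝ) / 2))) :=
  beta_concentration_general m n hmn hn
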